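/- Let H be a complex Hilbert space, r > 0 a real number, and A a bounded linear operator on H such that A ∘ A† = A† ∘ A = r • id, where A† is the adjoint of A. Fix φ ∈ H and N ∈ ℕ, and let H_N be the linear span of {Aⁱ((A†)ʲ(φ)) : i ≤ N, j ≤ N}, H_N⁻ the span of {Aⁱ((A†)ʲ(φ)) : i < N, j ≤ N}, and H_N⁺ the span of {Aⁱ((A†)ʲ(φ)) : 1 ≤ i ≤ N, j ≤ N}. Then: (1) the image of H_N⁻ under A equals H_N⁺; (2) the image of H_N⁺ under A† equals H_N⁻; and (3) the orthogonal complement of H_N⁻ within H_N and the orthogonal complement of H_N⁺ within H_N have the same (finite) dimension. -/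

import Mathlib

open ContinuousLinearMap

/-- The subspace `H_N` spanned by `Aⁱ (A†)ʲ φ` for `i ≤ N`, `j ≤ N`. -/
def HN {H : Type*} [NormedAddCommGroup H] [InnerProductSpace ℂ H] [CompleteSpace H]
    (A : H →L[ℂ] H) (φ : H) (N : ℕ) : Submodule ℂ H :=
  Submodule.span ℂ {x : H | ∃ i ≤ N, ∃ j ≤ N, x = (A ^ i) (((adjoint A) ^ j) φ)}

/-- The subspace `H_N⁻` spanned by `Aⁱ (A†)ʲ φ` for `i < N`, `j ≤ N`. -/
def HNminus {H : Type*} [NormedAddCommGroup H] [InnerProductSpace ℂ H] [CompleteSpace H]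
    (A : H →L[ℂ] H) (φ : H) (N : ℕ) : Submodule ℂ H :=
  Submodule.span ℂ {x : H | ∃ i < N, ∃ j ≤ N, x = (A ^ i) (((adjoint A) ^ j) φ)}

/-- The subspace `H_N⁺` spanned by `Aⁱ (A†)ʲ φ` for `1 ≤ i ≤ N`, `j ≤ N`. -/
def HNplus {H : Type*} [NormedAddCommGroup H] [InnerProductSpace ℂ H] [CompleteSpace H]
    (A : H →L[ℂ] H) (φ : H) (N : ℕ) : Submodule ℂ H :=
  Submodule.span ℂ {x : H | ∃ i, 1 ≤ i ∧ i ≤ N ∧ ∃ j ≤ N, x = (A ^ i) (((adjoint A) ^ j) φ)}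

/-! `A` shifts the generators `Aⁱ (A†)ʲ φ` of `H_N⁻` onto those of `H_N⁺`, and since `A† A = r • id`
with `r ≠ 0`, applying `A†` afterwards gives back `H_N⁻`. So `H_N⁻` and `H_N⁺` are images of each
other and have the same dimension; as both lie in the finite-dimensional `H_N`, their orthogonal
complements in `H_N` have the same dimension too. -/

theorem Submodule.map_map_eq_self_of_comp_eq_smul {K V W : Type*} [Field K]
    [AddCommGroup V] [Module K V] [AddCommGroup W] [Module K W]
    {f : V →ₗ[K] W} {g : W →ₗ[K] V} {c : K} (hc : c ≠ 0) (hgf : g ∘ₗ f = c • LinearMap.id)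
    (p : Submodule K V) : (p.map f).map g = p := by
  rw [← Submodule.map_comp, hgf, Submodule.map_smul _ _ _ hc, Submodule.map_id]

theorem Submodule.finrank_inf_orthogonal_eq_of_finrank_eq {𝕜 E : Type*} [RCLike 𝕜]
    [NormedAddCommGroup E] [InnerProductSpace 𝕜 E] {K K₁ K₂ : Submodule 𝕜 E}
    [FiniteDimensional 𝕜 K] (h₁ : K₁ ≤ K) (h₂ : K₂ ≤ K)
    (hfinrank : Module.finrank 𝕜 K₁ = Module.finrank 𝕜 K₂) :
    Module.finrank 𝕜 (K ⊓ K₁ᗮ : Submodule 𝕜 E) = Module.finrank 𝕜 (K ⊓ K₂ᗮ : Submodule 𝕜 E) := by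
  have e₁ := Submodule.finrank_add_inf_finrank_orthogonal h₁
  have e₂ := Submodule.finrank_add_inf_finrank_orthogonal h₂
  rw [inf_comm] at e₁ e₂
  omega

section

variable {H : Type*} [NormedAddCommGroup H] [InnerProductSpace ℂ H] [CompleteSpace H]
  (A : H →L[ℂ] H) (φ : H) (N : ℕ)

instance HN.finiteDimensional : FiniteDimensional ℂ (HN A φ N) := by
  refine FiniteDimensional.span_of_finite ℂ <|
    ((Set.finite_Iic N).prod (Set.finite_Iic N)).image
      (fun p : ℕ × ℕ => (A ^ p.1) ((adjoint A ^ p.2) φ)) |>.subset ?_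
  rintro x ⟨i, hi, j, hj, rfl⟩
  exact ⟨(i, j), ⟨hi, hj⟩, rfl⟩

theorem HNminus_le_HN : HNminus A φ N ≤ HN A φ N :=
  Submodule.span_mono fun _ ⟨i, hi, j, hj, hx⟩ => ⟨i, hi.le, j, hj, hx⟩

theorem HNplus_le_HN : HNplus A φ N ≤ HN A φ N :=
  Submodule.span_mono fun _ ⟨i, _, hi, j, hj, hx⟩ => ⟨i, hi, j, hj, hx⟩

theorem map_HNminus : (HNminus A φ N).map (A : H →ₗ[ℂ] H) = HNplus A φ N := by
  rw [HNminus, HNplus, Submodule.map_span]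
  congr 1
  ext x
  constructor
  · rintro ⟨y, ⟨i, hi, j, hj, rfl⟩, rfl⟩
    exact ⟨i + 1, by omega, hi, j, hj, by rw [pow_succ']; rfl⟩
  · rintro ⟨_ | i, hi₁, hi, j, hj, rfl⟩
    · omega
    exact ⟨(A ^ i) ((adjoint A ^ j) φ), ⟨i, hi, j, hj, rfl⟩, by rw [pow_succ']; rfl⟩

theorem map_adjoint_HNplus {c : ℂ} (hc : c ≠ 0)
    (hA : adjoint A ∘L A = c • ContinuousLinearMap.id ℂ H) :
    (HNplus A φ N).map (adjoint A : H →ₗ[ℂ] H) = HNminus A φ N := by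
  rw [← map_HNminus]
  refine Submodule.map_map_eq_self_of_comp_eq_smul hc ?_ _
  exact congrArg ContinuousLinearMap.toLinearMap hA

theorem finrank_HNminus_eq_finrank_HNplus {c : ℂ} (hc : c ≠ 0)
    (hA : adjoint A ∘L A = c • ContinuousLinearMap.id ℂ H) :
    Module.finrank ℂ (HNminus A φ N) = Module.finrank ℂ (HNplus A φ N) := by
  have : FiniteDimensional ℂ (HNminus A φ N) :=
    Submodule.finiteDimensional_of_le (HNminus_le_HN A φ N)
  have : FiniteDimensional ℂ (HNplus A φ N) :=
    Submodule.finiteDimensional_of_le (HNplus_le_HN A φ N)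
  refine le_antisymm ?_ ?_
  · rw [← map_adjoint_HNplus A φ N hc hA]
    exact Submodule.finrank_map_le _ _
  · rw [← map_HNminus]
    exact Submodule.finrank_map_le _ _

end

theorem stmt17_general
    {H : Type*} [NormedAddCommGroup H] [InnerProductSpace ℂ H] [CompleteSpace H]
    (r : ℝ) (hr : 0 < r) (A : H →L[ℂ] H)
    (h2 : adjoint A ∘L A = (r : ℂ) • ContinuousLinearMap.id ℂ H)
    (φ : H) (N : ℕ) :
    Submodule.map (A : H →ₗ[ℂ] H) (HNminus A φ N) = HNplus A φ N ∧
    Submodule.map ((adjoint A : H →L[ℂ] H) : H →ₗ[ℂ] H) (HNplus A φ N) = HNminus A φ N ∧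
    Module.finrank ℂ (HN A φ N ⊓ (HNminus A φ N)ᗮ : Submodule ℂ H) =
      Module.finrank ℂ (HN A φ N ⊓ (HNplus A φ N)ᗮ : Submodule ℂ H) := by
  have hr₀ : (r : ℂ) ≠ 0 := by exact_mod_cast hr.ne'
  exact ⟨map_HNminus A φ N, map_adjoint_HNplus A φ N hr₀ h2,
    Submodule.finrank_inf_orthogonal_eq_of_finrank_eq (HNminus_le_HN A φ N) (HNplus_le_HN A φ N)
      (finrank_HNminus_eq_finrank_HNplus A φ N hr₀ h2)⟩

/-- If `A A† = A† A = r • id` with `r > 0`, then `A` maps `H_N⁻` onto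
`H_N⁺`, `A†` maps `H_N⁺` onto `H_N⁻`, and the orthogonal complements of `H_N⁻` and of
`H_N⁺` within `H_N` have the same finite dimension. -/
theorem stmt17
    {H : Type*} [NormedAddCommGroup H] [InnerProductSpace ℂ H] [CompleteSpace H]
    (r : ℝ) (hr : 0 < r) (A : H →L[ℂ] H)
    (h1 : A ∘L adjoint A = (r : ℂ) • ContinuousLinearMap.id ℂ H)
    (h2 : adjoint A ∘L A = (r : ℂ) • ContinuousLinearMap.id ℂ H)
    (φ : H) (N : ℕ) :
    Submodule.map (A : H →ₗ[ℂ] H) (HNminus A φ N) = HNplus A φ N ∧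
    Submodule.map ((adjoint A : H →L[ℂ] H) : H →ₗ[ℂ] H) (HNplus A φ N) = HNminus A φ N ∧
    Module.finrank ℂ (HN A φ N ⊓ (HNminus A φ N)ᗮ : Submodule ℂ H) =
      Module.finrank ℂ (HN A φ N ⊓ (HNplus A φ N)ᗮ : Submodule ℂ H) :=
  stmt17_general r hr A h2 φ N
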